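/- Let A₁ = [[-1,0,0],[0,1,0],[0,0,1]] and A₂ = [[1,0,0],[-1,0,1],[1,1,0]] in GL(3,ℤ). The subgroup of GL(3,ℤ) generated by A₁ and A₂ is infinite. -/
import Mathlib

theorem stmt_2 (g₁ g₂ : Matrix.GeneralLinearGroup (Fin 3) ℤ)
    (h₁ : (g₁ : Matrix (Fin 3) (Fin 3) ℤ) = !![-1, 0, 0; 0, 1, 0; 0, 0, 1])
    (h₂ : (g₂ : Matrix (Fin 3) (Fin 3) ℤ) = !![1, 0, 0; -1, 0, 1; 1, 1, 0]) :
    Infinite (Subgroup.closure {g₁, g₂} : Subgroup (Matrix.GeneralLinearGroup (Fin 3) ℤ)) := by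
  have hbase : (((g₁ * g₂) ^ 2 : Matrix.GeneralLinearGroup (Fin 3) ℤ) : Matrix (Fin 3) (Fin 3) ℤ)
      = !![1, 0, 0; 2, 1, 0; -2, 0, 1] := by
    have : (((g₁ * g₂) ^ 2 : Matrix.GeneralLinearGroup (Fin 3) ℤ) : Matrix (Fin 3) (Fin 3) ℤ)
        = ((g₁ : Matrix (Fin 3) (Fin 3) ℤ) * g₂) * ((g₁ : Matrix (Fin 3) (Fin 3) ℤ) * g₂) := by
      push_cast [sq]
      ring
    rw [this, h₁, h₂]
    norm_num [Matrix.mul_fin_three]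
  have hD : ∀ n : ℕ, ((((g₁ * g₂) ^ 2) ^ n : Matrix.GeneralLinearGroup (Fin 3) ℤ) :
      Matrix (Fin 3) (Fin 3) ℤ) = !![1, 0, 0; 2 * (n:ℤ), 1, 0; -2 * (n:ℤ), 0, 1] := by
    intro n
    induction n with
    | zero => simp [Matrix.one_fin_three]
    | succ n ih =>
      have : ((((g₁ * g₂) ^ 2) ^ (n + 1) : Matrix.GeneralLinearGroup (Fin 3) ℤ) :
          Matrix (Fin 3) (Fin 3) ℤ)
          = ((((g₁ * g₂) ^ 2) ^ n : Matrix.GeneralLinearGroup (Fin 3) ℤ) :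
            Matrix (Fin 3) (Fin 3) ℤ) * (((g₁ * g₂) ^ 2 : Matrix.GeneralLinearGroup (Fin 3) ℤ) :
            Matrix (Fin 3) (Fin 3) ℤ) := by
        push_cast [pow_succ]
        ring
      rw [this, ih, hbase]
      ext i j
      fin_cases i <;> fin_cases j <;>
        simp [Matrix.mul_apply, Fin.sum_univ_three] <;> push_cast <;> ring
  have hmem : ∀ n : ℕ, ((g₁ * g₂) ^ 2) ^ n ∈ Subgroup.closure {g₁, g₂} := fun n =>
    pow_mem (pow_mem (mul_mem (Subgroup.subset_closure (by simp))
      (Subgroup.subset_closure (by simp))) 2) n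
  refine Infinite.of_injective (fun n : ℕ => (⟨((g₁ * g₂) ^ 2) ^ n, hmem n⟩ :
    Subgroup.closure {g₁, g₂})) ?_
  intro m n h
  have h2 : ((((g₁ * g₂) ^ 2) ^ m : Matrix.GeneralLinearGroup (Fin 3) ℤ) :
      Matrix (Fin 3) (Fin 3) ℤ) = ((((g₁ * g₂) ^ 2) ^ n : Matrix.GeneralLinearGroup (Fin 3) ℤ) :
      Matrix (Fin 3) (Fin 3) ℤ) := by
    have := congrArg Subtype.val h
    simp only at this
    exact congrArg Units.val this
  rw [hD m, hD n] at h2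
  have := congrFun (congrFun h2 1) 0
  simp at this
  omega
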